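/- arXiv:2507.15029 — 4 statements merged into one kernel-verified Lean document; each statement's English description precedes it below -/
import Mathlib

section
/- Let 1 < p < 2, let μ be a nonnegative locally finite Borel measure on ℝⁿ, let x ∈ ℝⁿ and ρ > 0. Then the truncated Wolff potential is controlled by the truncated Riesz potential: W^ρ_{1/p,p}(μ)(x) ≤ C (I_1^{2ρ}(μ)(x))^{1/(p-1)}, where C depends only on n and p. -/
open MeasureTheory Metric Set
open scoped ENNReal

/-! Since `r ↦ μ(B_r(x))` is nondecreasing, averaging the Riesz integrand over `(t, 2t)`
gives `μ(B_t(x)) / t^(n-1) ≤ 2^n I` for every `t < ρ`, where `I = I_1^{2ρ}(μ)(x)`.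
With `q = 1/(p-1) ≥ 1`, split the Wolff integrand as `a^q = a^(q-1) · a` and bound
`a^(q-1) ≤ (2^n I)^(q-1)`: what remains is the Riesz integrand, so
`W ≤ (2^n I)^(q-1) · I = 2^(n(q-1)) I^q`. -/

theorem ENNReal.rpow_sub_one_mul_self (a : ℝ≥0∞) {q : ℝ} (hq : 1 ≤ q) :
    a ^ (q - 1) * a = a ^ q := by
  conv_rhs => rw [← sub_add_cancel q 1]
  rw [ENNReal.rpow_add_of_nonneg _ _ (sub_nonneg.2 hq) zero_le_one, ENNReal.rpow_one]

theorem ENNReal.rpow_le_rpow_sub_one_mul {a K : ℝ≥0∞} {q : ℝ} (hq : 1 ≤ q)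
    (ha : a ≤ K) :
    a ^ q ≤ K ^ (q - 1) * a := by
  rw [← ENNReal.rpow_sub_one_mul_self a hq]
  gcongr

namespace MeasureTheory

theorem lintegral_rpow_div_le {α : Type*} [MeasurableSpace α] {ν : Measure α}
    {f g : α → ℝ≥0∞} {K : ℝ≥0∞} {q : ℝ} (hq : 1 ≤ q)
    (hfg : AEMeasurable (fun a => f a / g a) ν) (hf : ∀ᵐ a ∂ν, f a ≤ K) :
    ∫⁻ a, f a ^ q / g a ∂ν ≤ K ^ (q - 1) * ∫⁻ a, f a / g a ∂ν :=
  calc ∫⁻ a, f a ^ q / g a ∂ν ≤ ∫⁻ a, K ^ (q - 1) * (f a / g a) ∂ν := by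
        refine lintegral_mono_ae (hf.mono fun a ha => ?_)
        rw [← mul_div_assoc]
        gcongr
        exact ENNReal.rpow_le_rpow_sub_one_mul hq ha
    _ = K ^ (q - 1) * ∫⁻ a, f a / g a ∂ν := lintegral_const_mul'' _ hfg

end MeasureTheory

theorem ENNReal.div_ofReal_div_ofReal (a : ℝ≥0∞) {u : ℝ} (hu : 0 ≤ u) (v : ℝ) :
    a / ENNReal.ofReal u / ENNReal.ofReal v = a / ENNReal.ofReal (u * v) := by
  rw [div_eq_mul_inv, div_eq_mul_inv, div_eq_mul_inv, mul_assoc,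
    ← ENNReal.mul_inv (Or.inr ENNReal.ofReal_ne_top) (Or.inl ENNReal.ofReal_ne_top),
    ← ENNReal.ofReal_mul hu]

theorem div_rpow_sub_one_le_two_rpow_mul_setLIntegral {m : ℝ → ℝ≥0∞} (hm : Monotone m)
    {d : ℝ} (hd : 0 ≤ d) {t : ℝ} (ht : 0 < t) :
    m t / ENNReal.ofReal (t ^ (d - 1)) ≤ ENNReal.ofReal (2 ^ d) *
      ∫⁻ s in Ioo t (2 * t), m s / ENNReal.ofReal (s ^ (d - 1)) / ENNReal.ofReal s := by
  have hpt : ∀ s ∈ Ioo t (2 * t),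
      m t / ENNReal.ofReal (t ^ (d - 1) * 2 ^ d) / ENNReal.ofReal t ≤
        m s / ENNReal.ofReal (s ^ (d - 1)) / ENNReal.ofReal s := by
    rintro s ⟨hts, hs2t⟩
    have hs : 0 < s := ht.trans hts
    rw [ENNReal.div_ofReal_div_ofReal _ (by positivity),
      ENNReal.div_ofReal_div_ofReal _ (by positivity),
      ← Real.rpow_add_one hs.ne', sub_add_cancel, mul_right_comm, ← Real.rpow_add_one ht.ne',
      sub_add_cancel, ← Real.mul_rpow ht.le zero_le_two, mul_comm t]
    gcongr
    exact hm hts.le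
  have hvol : volume (Ioo t (2 * t)) = ENNReal.ofReal t := by
    rw [Real.volume_Ioo]; congr 1; ring
  have hlower : m t / ENNReal.ofReal (t ^ (d - 1) * 2 ^ d) ≤
      ∫⁻ s in Ioo t (2 * t), m s / ENNReal.ofReal (s ^ (d - 1)) / ENNReal.ofReal s :=
    calc m t / ENNReal.ofReal (t ^ (d - 1) * 2 ^ d)
        = ∫⁻ _ in Ioo t (2 * t),
            m t / ENNReal.ofReal (t ^ (d - 1) * 2 ^ d) / ENNReal.ofReal t := by
          rw [setLIntegral_const, hvol,
            ENNReal.div_mul_cancel (by simpa using ht) ENNReal.ofReal_ne_top]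
      _ ≤ _ := setLIntegral_mono' measurableSet_Ioo hpt
  rwa [← ENNReal.div_ofReal_div_ofReal _ (by positivity),
    ENNReal.div_le_iff (ENNReal.ofReal_pos.2 (by positivity)).ne' ENNReal.ofReal_ne_top,
    mul_comm] at hlower

/-- For `1 < p < 2`, the truncated Wolff potential `W^ρ_{1/p,p}(μ)(x)` is controlled by
`C (I_1^{2ρ}(μ)(x))^{1/(p-1)}`, with `C = C(n,p)`. -/
theorem wolff_le_riesz_rpow (n : ℕ) (p : ℝ) (hp1 : 1 < p) (hp2 : p < 2) :
    ∃ C : ℝ, 0 < C ∧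
      ∀ (μ : Measure (EuclideanSpace ℝ (Fin n))) [IsLocallyFiniteMeasure μ]
        (x : EuclideanSpace ℝ (Fin n)) (ρ : ℝ), 0 < ρ →
        (∫⁻ t in Ioo (0:ℝ) ρ,
            (μ (ball x t) / ENNReal.ofReal (t ^ ((n:ℝ) - 1))) ^ (1 / (p - 1))
              / ENNReal.ofReal t)
          ≤ ENNReal.ofReal C *
            ((∫⁻ t in Ioo (0:ℝ) (2 * ρ),
                μ (ball x t) / ENNReal.ofReal (t ^ ((n:ℝ) - 1)) / ENNReal.ofReal t)
              ^ (1 / (p - 1))) := by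
  have hq : 1 ≤ 1 / (p - 1) := by rw [le_div_iff₀ (by linarith)]; linarith
  refine ⟨(2 ^ (n : ℝ)) ^ (1 / (p - 1) - 1), by positivity, fun μ _ x ρ hρ => ?_⟩
  have hm : Monotone fun t => μ (ball x t) := fun _ _ h => measure_mono (ball_subset_ball h)
  set I := ∫⁻ t in Ioo (0:ℝ) (2 * ρ),
    μ (ball x t) / ENNReal.ofReal (t ^ ((n:ℝ) - 1)) / ENNReal.ofReal t
  have hbound : ∀ t ∈ Ioo 0 ρ,
      μ (ball x t) / ENNReal.ofReal (t ^ ((n:ℝ) - 1)) ≤ ENNReal.ofReal (2 ^ (n : ℝ)) * I :=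
    fun t ht => (div_rpow_sub_one_le_two_rpow_mul_setLIntegral hm n.cast_nonneg ht.1).trans <| by
      gcongr
      exact lintegral_mono_set (Ioo_subset_Ioo ht.1.le (by linarith [ht.2]))
  calc _ ≤ (ENNReal.ofReal (2 ^ (n : ℝ)) * I) ^ (1 / (p - 1) - 1) * ∫⁻ t in Ioo (0:ℝ) ρ,
          μ (ball x t) / ENNReal.ofReal (t ^ ((n:ℝ) - 1)) / ENNReal.ofReal t :=
        lintegral_rpow_div_le hq
          ((hm.measurable.div (by fun_prop)).div (by fun_prop)).aemeasurable
          (ae_restrict_of_forall_mem measurableSet_Ioo hbound)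
    _ ≤ (ENNReal.ofReal (2 ^ (n : ℝ)) * I) ^ (1 / (p - 1) - 1) * I := by
        gcongr
        exact lintegral_mono_set (Ioo_subset_Ioo le_rfl (by linarith))
    _ = _ := by
        rw [ENNReal.mul_rpow_of_nonneg _ _ (sub_nonneg.2 hq),
          ENNReal.ofReal_rpow_of_pos (by positivity), mul_assoc,
          ENNReal.rpow_sub_one_mul_self I hq]
end

section
/- Let ω : (0,1] → [0,∞) be nondecreasing with ∫_0^1 ω(r)^{2/p}/r dr < ∞ for some p ≥ 2, let ε ∈ (0,1), α₁ > 0 and R ∈ (0,1]. Define ω̃(t) = Σ_{i=0}^∞ ε^{α₁ i} ( ω(ε^{-i} t)^{2/p} · [ε^{-i} t ≤ R/2] + ω(R/2)^{2/p} · [ε^{-i} t > R/2] ) for t ∈ (0,1], where [P] denotes the Iverson bracket. Then ∫_0^1 ω̃(r)/r dr < ∞. -/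
/-!
Write `ω̃(t) = ∑ᵢ ε^{α₁ i} h(ε^{-i} t)`, where `h` is `ω^{2/p}` frozen at its value at `R/2`
beyond `R/2`. The substitution `s = ε^{-i} t` preserves `dt/t`, so the `i`-th term of
`∫_0^1 ω̃(t) dt/t` is `ε^{α₁ i} ∫_0^{ε^{-i}} h(s) ds/s`, and splitting at `R/2` bounds it by
`ε^{α₁ i} (∫_0^1 ω(s)^{2/p} ds/s + ω(R/2)^{2/p} log(2ε^{-i}/R))`. The bracket grows only
linearly in `i`, so the geometric weights make the series converge.
-/

open MeasureTheory Set
open scoped ENNReal NNReal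

lemma setLIntegral_Ioo_comp_mul_div (g : ℝ → ℝ≥0∞) {c : ℝ} (hc : 0 < c) :
    ∫⁻ t in Ioo 0 1, g (c * t) / ENNReal.ofReal t
      = ∫⁻ s in Ioo 0 c, g s / ENNReal.ofReal s := by
  have hc₀ : ENNReal.ofReal c ≠ 0 := by simpa using hc
  have hmap : Measure.map (c * ·) (volume.restrict (Ioo (0 : ℝ) 1))
      = ENNReal.ofReal c⁻¹ • volume.restrict (Ioo 0 c) := by
    have hpre : (c * ·) ⁻¹' Ioo 0 c = Ioo (0 : ℝ) 1 := by
      rw [preimage_const_mul_Ioo₀ _ _ hc, zero_div, div_self hc.ne']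
    rw [← hpre, ← Measure.restrict_map (measurable_const_mul c) measurableSet_Ioo,
      Real.map_volume_mul_left hc.ne', Measure.restrict_smul, abs_of_pos (inv_pos.2 hc)]
  calc ∫⁻ t in Ioo 0 1, g (c * t) / ENNReal.ofReal t
      = ∫⁻ t in Ioo 0 1, ENNReal.ofReal c * (g (c * t) / ENNReal.ofReal (c * t)) := by
        refine setLIntegral_congr_fun measurableSet_Ioo fun t _ => ?_
        rw [ENNReal.ofReal_mul hc.le, ← mul_div_assoc,
          ENNReal.mul_div_mul_left _ _ hc₀ ENNReal.ofReal_ne_top]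
    _ = ENNReal.ofReal c * ∫⁻ s, g s / ENNReal.ofReal s
          ∂Measure.map (c * ·) (volume.restrict (Ioo 0 1)) := by
        rw [lintegral_const_mul' _ _ ENNReal.ofReal_ne_top,
          (measurableEmbedding_mulLeft₀ hc.ne').lintegral_map]
    _ = ∫⁻ s in Ioo 0 c, g s / ENNReal.ofReal s := by
        rw [hmap, lintegral_smul_measure, smul_eq_mul, ← mul_assoc, ← ENNReal.ofReal_mul hc.le,
          mul_inv_cancel₀ hc.ne', ENNReal.ofReal_one, one_mul]

lemma setLIntegral_Ioc_inv_ofReal {a b : ℝ} (ha : 0 < a) (hab : a ≤ b) :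
    ∫⁻ s in Ioc a b, (ENNReal.ofReal s)⁻¹ = ENNReal.ofReal (Real.log (b / a)) := by
  have hpos : ∀ s ∈ Ioc a b, 0 < s := fun s hs => ha.trans hs.1
  have hint : IntegrableOn (fun s : ℝ => s⁻¹) (Ioc a b) :=
    (intervalIntegrable_iff_integrableOn_Ioc_of_le hab).1 <|
      intervalIntegral.intervalIntegrable_inv (fun s hs => by
        rw [uIcc_of_le hab] at hs; exact (ha.trans_le hs.1).ne') continuousOn_id
  rw [setLIntegral_congr_fun measurableSet_Ioc fun s hs =>
      (ENNReal.ofReal_inv_of_pos (hpos s hs)).symm,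
    ← ofReal_integral_eq_lintegral_ofReal hint <| (ae_restrict_iff' measurableSet_Ioc).2 <|
      ae_of_all _ fun s hs => (inv_pos.2 (hpos s hs)).le,
    ← intervalIntegral.integral_of_le hab, integral_inv_of_pos ha (ha.trans_le hab)]

/-- With `f = ω^{2/p}` and `a = R/2`, `ω̃(t) = ∑ᵢ ε^{α₁ i} freezeAbove f a (ε^{-i} t)` for `t > 0`. -/
noncomputable def freezeAbove (f : ℝ → ℝ≥0∞) (a : ℝ) : ℝ → ℝ≥0∞ :=
  (Ioc 0 a).indicator f + (Ioi a).indicator fun _ => f a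

section freezeAbove

variable {f : ℝ → ℝ≥0∞} {a : ℝ}

lemma freezeAbove_of_pos {s : ℝ} (hs : 0 < s) :
    freezeAbove f a s = if s ≤ a then f s else f a := by
  split_ifs with hsa
  · simp [freezeAbove, indicator_of_mem (mem_Ioc.2 ⟨hs, hsa⟩), hsa]
  · simp [freezeAbove, indicator_of_mem (mem_Ioi.2 (not_le.1 hsa)), hs, hsa]

lemma aemeasurable_freezeAbove {μ : Measure ℝ} (hf : AEMeasurable f (μ.restrict (Ioc 0 a))) :
    AEMeasurable (freezeAbove f a) μ :=
  ((aemeasurable_indicator_iff measurableSet_Ioc).2 hf).add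
    (aemeasurable_const.indicator measurableSet_Ioi)

lemma setLIntegral_freezeAbove_div_le (ha : 0 < a) (ha₁ : a < 1) {c : ℝ} (hac : a ≤ c) :
    ∫⁻ s in Ioo 0 c, freezeAbove f a s / ENNReal.ofReal s
      ≤ (∫⁻ s in Ioo 0 1, f s / ENNReal.ofReal s) + f a * ENNReal.ofReal (Real.log (c / a)) := by
  have hlow : ∫⁻ s in Ioc 0 a, freezeAbove f a s / ENNReal.ofReal s
      ≤ ∫⁻ s in Ioo 0 1, f s / ENNReal.ofReal s := by
    rw [setLIntegral_congr_fun measurableSet_Ioc fun s hs => by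
      rw [freezeAbove_of_pos hs.1, if_pos hs.2]]
    exact lintegral_mono_set (Ioc_subset_Ioo_right ha₁)
  have hhigh : ∫⁻ s in Ioc a c, freezeAbove f a s / ENNReal.ofReal s
      = f a * ENNReal.ofReal (Real.log (c / a)) := by
    rw [setLIntegral_congr_fun measurableSet_Ioc fun s hs => by
      rw [freezeAbove_of_pos (ha.trans hs.1), if_neg (not_le.2 hs.1), div_eq_mul_inv],
      lintegral_const_mul _ (by fun_prop), setLIntegral_Ioc_inv_ofReal ha hac]
  calc ∫⁻ s in Ioo 0 c, freezeAbove f a s / ENNReal.ofReal s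
      ≤ ∫⁻ s in Ioc 0 a ∪ Ioc a c, freezeAbove f a s / ENNReal.ofReal s := by
        rw [Ioc_union_Ioc_eq_Ioc ha.le hac]
        exact lintegral_mono_set Ioo_subset_Ioc_self
    _ ≤ _ := (lintegral_union_le _ _ _).trans (add_le_add hlow hhigh.le)

end freezeAbove

lemma setLIntegral_Ioo_tsum_comp_mul_div {h : ℝ → ℝ≥0∞} (hh : AEMeasurable h)
    (w : ℕ → ℝ≥0∞) {c : ℕ → ℝ} (hc : ∀ i, 0 < c i) :
    ∫⁻ t in Ioo 0 1, (∑' i, w i * h (c i * t)) / ENNReal.ofReal t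
      = ∑' i, w i * ∫⁻ s in Ioo 0 (c i), h s / ENNReal.ofReal s := by
  have hmeas (i : ℕ) : AEMeasurable (fun t => h (c i * t) / ENNReal.ofReal t)
      (volume.restrict (Ioo 0 1)) :=
    (hh.comp_quasiMeasurePreserving (Measure.quasiMeasurePreserving_smul volume
      (hc i).ne')).restrict.div ENNReal.measurable_ofReal.aemeasurable
  simp_rw [div_eq_mul_inv, ← ENNReal.tsum_mul_right, mul_assoc, ← div_eq_mul_inv]
  rw [lintegral_tsum fun i => (hmeas i).const_mul _]
  congr 1 with i
  rw [lintegral_const_mul'' _ (hmeas i), setLIntegral_Ioo_comp_mul_div _ (hc i)]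

lemma ENNReal.tsum_pow_mul_add_mul_lt_top {r A B : ℝ≥0∞} (hr : r < 1) (hA : A ≠ ⊤) (hB : B ≠ ⊤) :
    ∑' i : ℕ, r ^ i * (A + B * i) < ⊤ := by
  lift r to ℝ≥0 using hr.ne_top
  lift A to ℝ≥0 using hA
  lift B to ℝ≥0 using hB
  have hr' : ‖(r : ℝ)‖ < 1 := by simpa using hr
  have hsum : Summable fun i : ℕ => r ^ i * (A + B * i) := by
    rw [← NNReal.summable_coe]
    push_cast
    have := summable_pow_mul_geometric_of_norm_lt_one 1 hr'
    simp only [pow_one] at this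
    exact (((summable_geometric_of_norm_lt_one hr').mul_left (A : ℝ)).add
      (this.mul_left (B : ℝ))).congr fun i => by ring
  simpa using (ENNReal.tsum_coe_ne_top_iff_summable.2 hsum).lt_top

lemma ofReal_log_rpow_neg_natCast_div {ε a : ℝ} (hε0 : 0 < ε) (hε1 : ε ≤ 1) (ha : 0 < a)
    (ha₁ : a ≤ 1) (i : ℕ) :
    ENNReal.ofReal (Real.log (ε ^ (-(i : ℝ)) / a))
      = ENNReal.ofReal (Real.log a⁻¹) + ENNReal.ofReal (Real.log ε⁻¹) * i := by
  have hlog : Real.log (ε ^ (-(i : ℝ)) / a) = Real.log a⁻¹ + Real.log ε⁻¹ * i := by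
    rw [Real.log_div (Real.rpow_pos_of_pos hε0 _).ne' ha.ne', Real.log_rpow hε0, Real.log_inv,
      Real.log_inv]
    ring
  have hL : 0 ≤ Real.log ε⁻¹ := Real.log_nonneg ((one_le_inv₀ hε0).2 hε1)
  rw [hlog, ENNReal.ofReal_add (Real.log_nonneg ((one_le_inv₀ ha).2 ha₁)) (by positivity),
    ENNReal.ofReal_mul hL, ENNReal.ofReal_natCast]

theorem dini_of_tail_sum_general (p ε α₁ R : ℝ) (hε0 : 0 < ε) (hε1 : ε < 1)
    (hα : 0 < α₁) (hR0 : 0 < R) (hR1 : R ≤ 1)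
    (ω : ℝ → ℝ)
    (hmono : MonotoneOn ω (Set.Ioc (0:ℝ) 1))
    (hDini : ∫⁻ r in Set.Ioo (0:ℝ) 1, ENNReal.ofReal (ω r ^ (2 / p) / r) < ⊤) :
    (∫⁻ t in Set.Ioo (0:ℝ) 1,
        (∑' i : ℕ, ENNReal.ofReal (ε ^ (α₁ * (i:ℝ))) *
          (if ε ^ (-(i:ℝ)) * t ≤ R / 2
            then ENNReal.ofReal (ω (ε ^ (-(i:ℝ)) * t) ^ (2 / p))
            else ENNReal.ofReal (ω (R / 2) ^ (2 / p)))) / ENNReal.ofReal t) < ⊤ := by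
  set f : ℝ → ℝ≥0∞ := fun s => ENNReal.ofReal (ω s ^ (2 / p))
  have ha : 0 < R / 2 := by positivity
  have ha₁ : R / 2 < 1 := by linarith
  have hc (i : ℕ) : 0 < ε ^ (-(i : ℝ)) := Real.rpow_pos_of_pos hε0 _
  have hac (i : ℕ) : R / 2 ≤ ε ^ (-(i : ℝ)) :=
    ha₁.le.trans (Real.one_le_rpow_of_pos_of_le_one_of_nonpos hε0 hε1.le (by simp))
  have hf : AEMeasurable f (volume.restrict (Ioc 0 (R / 2))) :=
    ENNReal.measurable_ofReal.comp_aemeasurable <| (aemeasurable_restrict_of_monotoneOn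
      measurableSet_Ioc (hmono.mono (Ioc_subset_Ioc_right ha₁.le))).pow_const _
  have hD : ∫⁻ s in Ioo 0 1, f s / ENNReal.ofReal s ≠ ⊤ := by
    rw [← setLIntegral_congr_fun measurableSet_Ioo fun s hs => ENNReal.ofReal_div_of_pos hs.1]
    exact hDini.ne
  set D := ∫⁻ s in Ioo 0 1, f s / ENNReal.ofReal s
  calc _ = ∫⁻ t in Ioo 0 1, (∑' i : ℕ, ENNReal.ofReal (ε ^ (α₁ * i))
          * freezeAbove f (R / 2) (ε ^ (-(i : ℝ)) * t)) / ENNReal.ofReal t := by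
        refine setLIntegral_congr_fun measurableSet_Ioo fun t ht => ?_
        simp_rw [freezeAbove_of_pos (mul_pos (hc _) ht.1)]
        rfl
    _ = ∑' i : ℕ, ENNReal.ofReal (ε ^ (α₁ * i))
          * ∫⁻ s in Ioo 0 (ε ^ (-(i : ℝ))), freezeAbove f (R / 2) s / ENNReal.ofReal s :=
        setLIntegral_Ioo_tsum_comp_mul_div (aemeasurable_freezeAbove hf) _ hc
    _ ≤ ∑' i : ℕ, ENNReal.ofReal (ε ^ (α₁ * i))
          * (D + f (R / 2) * ENNReal.ofReal (Real.log (ε ^ (-(i : ℝ)) / (R / 2)))) :=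
        ENNReal.tsum_le_tsum fun i =>
          mul_le_mul_right (setLIntegral_freezeAbove_div_le ha ha₁ (hac i)) _
    _ = ∑' i : ℕ, ENNReal.ofReal (ε ^ α₁) ^ i
          * ((D + f (R / 2) * ENNReal.ofReal (Real.log (R / 2)⁻¹))
            + f (R / 2) * ENNReal.ofReal (Real.log ε⁻¹) * i) := by
        congr 1 with i
        rw [ofReal_log_rpow_neg_natCast_div hε0 hε1.le ha ha₁.le i,
          ← ENNReal.ofReal_pow (Real.rpow_nonneg hε0.le _), ← Real.rpow_natCast,
          ← Real.rpow_mul hε0.le]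
        ring
    _ < ⊤ := ENNReal.tsum_pow_mul_add_mul_lt_top
        (ENNReal.ofReal_lt_one.2 (Real.rpow_lt_one hε0.le hε1 hα))
        (ENNReal.add_ne_top.2 ⟨hD, by finiteness⟩) (by finiteness)

/-- If `ω` is nondecreasing on `(0,1]` and `ω^{2/p}` satisfies the Dini condition, then the
weighted tail sum `ω̃(t) = Σ_i ε^{α₁ i} (ω(ε^{-i}t)^{2/p} [ε^{-i}t ≤ R/2] + ω(R/2)^{2/p} [ε^{-i}t > R/2])`
also satisfies the Dini condition. -/
theorem dini_of_tail_sum (p ε α₁ R : ℝ) (hp : 2 ≤ p) (hε0 : 0 < ε) (hε1 : ε < 1)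
    (hα : 0 < α₁) (hR0 : 0 < R) (hR1 : R ≤ 1)
    (ω : ℝ → ℝ) (hω0 : ∀ t ∈ Set.Ioc (0:ℝ) 1, 0 ≤ ω t)
    (hmono : MonotoneOn ω (Set.Ioc (0:ℝ) 1))
    (hDini : ∫⁻ r in Set.Ioo (0:ℝ) 1, ENNReal.ofReal (ω r ^ (2 / p) / r) < ⊤) :
    (∫⁻ t in Set.Ioo (0:ℝ) 1,
        (∑' i : ℕ, ENNReal.ofReal (ε ^ (α₁ * (i:ℝ))) *
          (if ε ^ (-(i:ℝ)) * t ≤ R / 2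
            then ENNReal.ofReal (ω (ε ^ (-(i:ℝ)) * t) ^ (2 / p))
            else ENNReal.ofReal (ω (R / 2) ^ (2 / p)))) / ENNReal.ofReal t) < ⊤ :=
  dini_of_tail_sum_general p ε α₁ R hε0 hε1 hα hR0 hR1 ω hmono hDini
end

section
/- Let 1 < p < 2, s ≥ 0, B ⊂ ℝⁿ a ball, and f, g : B → ℝⁿ measurable with (|f|² + |g|² + s²)^{p/2} integrable on B. Then the Hölder-interpolation bound ⨍_B |f − g|^p dx ≤ C ( ⨍_B |V(f) − V(g)|² dx )^{p/2} ( ⨍_B (|f|² + |g|² + s²)^{p/2} dx )^{(2-p)/2} holds, where V(ξ) = (|ξ|²+s²)^{(p-2)/4} ξ and C depends only on n and p. -/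
/-!
Write `W = |ξ|² + |η|² + s²`. The heart of the matter is the pointwise bound
`(p/2) W^{(p-2)/4} |ξ - η| ≤ |V(ξ) - V(η)|`. After squaring, both sides are affine in `⟪ξ, η⟫`,
which ranges over `[-|ξ||η|, |ξ||η|]`, so only parallel and antiparallel vectors need checking.
These are one-dimensional: `t ↦ (t² + s²)^{(p-2)/4} t` has derivative at least
`(p/2)(t² + s²)^{(p-2)/4} ≥ (p/2) W^{(p-2)/4}` (mean value theorem), and each coefficient of `V`
is at least `W^{(p-2)/4}`.

Raising `|ξ - η| ≤ (2/p) |V(ξ) - V(η)| W^{(2-p)/4}` to the power `p` and integrating,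
Hölder's inequality in the form `∫ u^θ v^{1-θ} ≤ (∫ u)^θ (∫ v)^{1-θ}` with `θ = p/2`,
`u = |V(f) - V(g)|²`, `v = W^{p/2}`, applied to the normalised measure on the ball, gives the
claim with `C = (2/p)^p`.
-/

open MeasureTheory Metric Real

namespace MeasureTheory

variable {α : Type*} [MeasurableSpace α] {μ : Measure α} {u v : α → ℝ} {θ : ℝ}

theorem Integrable.rpow_mul_rpow_one_sub (hu : Integrable u μ) (hv : Integrable v μ)
    (hu₀ : 0 ≤ᵐ[μ] u) (hv₀ : 0 ≤ᵐ[μ] v) (hθ₀ : 0 ≤ θ) (hθ₁ : θ ≤ 1) :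
    Integrable (fun x => u x ^ θ * v x ^ (1 - θ)) μ := by
  refine ((hu.const_mul θ).add (hv.const_mul (1 - θ))).mono'
    ((hu.aemeasurable.pow_const θ).mul (hv.aemeasurable.pow_const _)).aestronglyMeasurable ?_
  filter_upwards [hu₀, hv₀] with x hux hvx
  rw [norm_of_nonneg (mul_nonneg (rpow_nonneg hux _) (rpow_nonneg hvx _))]
  exact geom_mean_le_arith_mean2_weighted hθ₀ (sub_nonneg.2 hθ₁) hux hvx (by ring)

theorem integral_rpow_mul_rpow_one_sub_le (hu : Integrable u μ) (hv : Integrable v μ)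
    (hu₀ : 0 ≤ᵐ[μ] u) (hv₀ : 0 ≤ᵐ[μ] v) (hθ₀ : 0 ≤ θ) (hθ₁ : θ ≤ 1) :
    ∫ x, u x ^ θ * v x ^ (1 - θ) ∂μ ≤ (∫ x, u x ∂μ) ^ θ * (∫ x, v x ∂μ) ^ (1 - θ) := by
  have hθ₁' : 0 ≤ 1 - θ := sub_nonneg.2 hθ₁
  have hprod₀ : 0 ≤ᵐ[μ] fun x => u x ^ θ * v x ^ (1 - θ) := by
    filter_upwards [hu₀, hv₀] with x hux hvx
    exact mul_nonneg (rpow_nonneg hux _) (rpow_nonneg hvx _)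
  rw [← ENNReal.ofReal_le_ofReal_iff (mul_nonneg (rpow_nonneg (integral_nonneg_of_ae hu₀) _)
      (rpow_nonneg (integral_nonneg_of_ae hv₀) _)),
    ofReal_integral_eq_lintegral_ofReal (hu.rpow_mul_rpow_one_sub hv hu₀ hv₀ hθ₀ hθ₁) hprod₀,
    ENNReal.ofReal_mul (rpow_nonneg (integral_nonneg_of_ae hu₀) _),
    ← ENNReal.ofReal_rpow_of_nonneg (integral_nonneg_of_ae hu₀) hθ₀,
    ← ENNReal.ofReal_rpow_of_nonneg (integral_nonneg_of_ae hv₀) hθ₁',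
    ofReal_integral_eq_lintegral_ofReal hu hu₀, ofReal_integral_eq_lintegral_ofReal hv hv₀]
  calc ∫⁻ x, ENNReal.ofReal (u x ^ θ * v x ^ (1 - θ)) ∂μ
      = ∫⁻ x, ENNReal.ofReal (u x) ^ θ * ENNReal.ofReal (v x) ^ (1 - θ) ∂μ := by
        refine lintegral_congr_ae ?_
        filter_upwards [hu₀, hv₀] with x hux hvx
        rw [ENNReal.ofReal_mul (rpow_nonneg hux _), ENNReal.ofReal_rpow_of_nonneg hux hθ₀,
          ENNReal.ofReal_rpow_of_nonneg hvx hθ₁']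
    _ ≤ _ := ENNReal.lintegral_mul_norm_pow_le hu.aemeasurable.ennreal_ofReal
        hv.aemeasurable.ennreal_ofReal hθ₀ hθ₁' (by ring)

end MeasureTheory

section

variable {E : Type*} [NormedAddCommGroup E] [InnerProductSpace ℝ E]

theorem mul_norm_sub_le_norm_smul_sub_smul {K α β : ℝ} {ξ η : E}
    (h₁ : K * |‖ξ‖ - ‖η‖| ≤ |α * ‖ξ‖ - β * ‖η‖|) (h₂ : K * (‖ξ‖ + ‖η‖) ≤ α * ‖ξ‖ + β * ‖η‖) :
    K * ‖ξ - η‖ ≤ ‖α • ξ - β • η‖ := by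
  rcases lt_or_ge K 0 with hK | hK
  · exact (mul_nonpos_of_nonpos_of_nonneg hK.le (norm_nonneg _)).trans (norm_nonneg _)
  have hminus : (K * (‖ξ‖ - ‖η‖)) ^ 2 ≤ (α * ‖ξ‖ - β * ‖η‖) ^ 2 := by
    rwa [sq_le_sq, abs_mul, abs_of_nonneg hK]
  have hplus : (K * (‖ξ‖ + ‖η‖)) ^ 2 ≤ (α * ‖ξ‖ + β * ‖η‖) ^ 2 :=
    pow_le_pow_left₀ (by positivity) h₂ 2
  have hinner := abs_le.1 (abs_real_inner_le_norm ξ η)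
  refine (pow_le_pow_iff_left₀ (by positivity) (norm_nonneg _) two_ne_zero).1 ?_
  rw [mul_pow, norm_sub_sq_real, norm_sub_sq_real, norm_smul, norm_smul, real_inner_smul_left,
    real_inner_smul_right, mul_pow, mul_pow, norm_eq_abs, norm_eq_abs, sq_abs, sq_abs]
  -- the difference of the two sides is `X - 2 ⟪ξ, η⟫ (α β - K²)`, while `h₁` and `h₂` say
  -- `X ≥ ± 2 ‖ξ‖ ‖η‖ (α β - K²)`
  rcases le_total 0 (α * β - K ^ 2) with hY | hY <;> nlinarith

variable {p s : ℝ}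

theorem hasDerivAt_mul_rpow_sq_add_sq {e t : ℝ} (ht : t ^ 2 + s ^ 2 ≠ 0) :
    HasDerivAt (fun x => (x ^ 2 + s ^ 2) ^ e * x)
      ((t ^ 2 + s ^ 2) ^ (e - 1) * ((1 + 2 * e) * t ^ 2 + s ^ 2)) t := by
  have hsq : HasDerivAt (fun x => x ^ 2 + s ^ 2) (2 * t) t := by
    simpa using (hasDerivAt_pow 2 t).add_const (s ^ 2)
  refine ((hsq.rpow_const (p := e) (Or.inl ht)).mul (hasDerivAt_id' t)).congr_deriv ?_
  rw [rpow_sub_one ht]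
  field_simp
  ring

theorem half_mul_rpow_mul_le_mul_rpow (hp₂ : p ≤ 2) {a W : ℝ} (ha : 0 ≤ a)
    (hW : a ^ 2 + s ^ 2 ≤ W) :
    p / 2 * W ^ ((p - 2) / 4) * a ≤ (a ^ 2 + s ^ 2) ^ ((p - 2) / 4) * a := by
  rcases ha.eq_or_lt with rfl | ha
  · simp
  have hW' : W ^ ((p - 2) / 4) ≤ (a ^ 2 + s ^ 2) ^ ((p - 2) / 4) :=
    rpow_le_rpow_of_nonpos (by positivity) hW (by linarith)
  have hW₀ : 0 ≤ W ^ ((p - 2) / 4) := rpow_nonneg ((by positivity : (0 : ℝ) ≤ _).trans hW) _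
  nlinarith [mul_le_mul_of_nonneg_right hW' ha.le, mul_nonneg hW₀ ha.le]

theorem half_mul_rpow_mul_sub_le (hp₀ : 0 ≤ p) (hp₂ : p ≤ 2) {a b : ℝ} (hb : 0 ≤ b)
    (hba : b ≤ a) :
    p / 2 * (a ^ 2 + b ^ 2 + s ^ 2) ^ ((p - 2) / 4) * (a - b)
      ≤ (a ^ 2 + s ^ 2) ^ ((p - 2) / 4) * a - (b ^ 2 + s ^ 2) ^ ((p - 2) / 4) * b := by
  rcases hb.eq_or_lt with rfl | hb
  · simpa using half_mul_rpow_mul_le_mul_rpow hp₂ hba (by simp)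
  have hderiv : ∀ t ∈ Set.Icc b a, HasDerivAt (fun x => (x ^ 2 + s ^ 2) ^ ((p - 2) / 4) * x)
      ((t ^ 2 + s ^ 2) ^ ((p - 2) / 4 - 1) * (p / 2 * t ^ 2 + s ^ 2)) t := fun t ht => by
    have ht₀ : t ^ 2 + s ^ 2 ≠ 0 := by have := hb.trans_le ht.1; positivity
    convert hasDerivAt_mul_rpow_sq_add_sq (e := (p - 2) / 4) ht₀ using 3
    ring
  refine (convex_Icc b a).mul_sub_le_image_sub_of_le_deriv
    (fun t ht => (hderiv t ht).continuousAt.continuousWithinAt)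
    (fun t ht => (hderiv t (interior_subset ht)).differentiableAt.differentiableWithinAt)
    (fun t ht => ?_) b ⟨le_rfl, hba⟩ a ⟨hba, le_rfl⟩ hba
  rw [interior_Icc] at ht
  have htpos : 0 < t ^ 2 + s ^ 2 := by have := hb.trans ht.1; positivity
  rw [(hderiv t (Set.Ioo_subset_Icc_self ht)).deriv]
  calc p / 2 * (a ^ 2 + b ^ 2 + s ^ 2) ^ ((p - 2) / 4)
      ≤ p / 2 * (t ^ 2 + s ^ 2) ^ ((p - 2) / 4) := by
        refine mul_le_mul_of_nonneg_left (rpow_le_rpow_of_nonpos htpos ?_ ?_) (by positivity)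
        · nlinarith [ht.2, hb.trans ht.1]
        · linarith
    _ = (t ^ 2 + s ^ 2) ^ ((p - 2) / 4 - 1) * (p / 2 * (t ^ 2 + s ^ 2)) := by
        rw [rpow_sub_one htpos.ne']
        field_simp
    _ ≤ (t ^ 2 + s ^ 2) ^ ((p - 2) / 4 - 1) * (p / 2 * t ^ 2 + s ^ 2) := by
        gcongr
        nlinarith [sq_nonneg s]

noncomputable def vMap (p s : ℝ) (ξ : E) : E := (‖ξ‖ ^ 2 + s ^ 2) ^ ((p - 2) / 4) • ξ

theorem half_mul_rpow_mul_norm_sub_le_norm_vMap_sub (hp₀ : 0 ≤ p) (hp₂ : p ≤ 2) (ξ η : E) :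
    p / 2 * (‖ξ‖ ^ 2 + ‖η‖ ^ 2 + s ^ 2) ^ ((p - 2) / 4) * ‖ξ - η‖
      ≤ ‖vMap p s ξ - vMap p s η‖ := by
  refine mul_norm_sub_le_norm_smul_sub_smul ?_ ?_
  · rcases le_total ‖η‖ ‖ξ‖ with h | h
    · rw [abs_of_nonneg (sub_nonneg.2 h)]
      exact (half_mul_rpow_mul_sub_le hp₀ hp₂ (norm_nonneg η) h).trans (le_abs_self _)
    · rw [abs_sub_comm, abs_of_nonneg (sub_nonneg.2 h), abs_sub_comm, add_comm (‖ξ‖ ^ 2)]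
      exact (half_mul_rpow_mul_sub_le hp₀ hp₂ (norm_nonneg ξ) h).trans (le_abs_self _)
  · rw [mul_add]
    exact add_le_add
      (half_mul_rpow_mul_le_mul_rpow hp₂ (norm_nonneg ξ) (by linarith [sq_nonneg ‖η‖]))
      (half_mul_rpow_mul_le_mul_rpow hp₂ (norm_nonneg η) (by linarith [sq_nonneg ‖ξ‖]))

theorem norm_sub_le_div_mul_norm_vMap_sub_mul_rpow (hp₀ : 0 < p) (hp₂ : p ≤ 2) (ξ η : E) :
    ‖ξ - η‖ ≤ 2 / p * ‖vMap p s ξ - vMap p s η‖ * (‖ξ‖ ^ 2 + ‖η‖ ^ 2 + s ^ 2) ^ ((2 - p) / 4) := by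
  set W := ‖ξ‖ ^ 2 + ‖η‖ ^ 2 + s ^ 2
  rcases (by positivity : 0 ≤ W).eq_or_lt with hW | hW
  · have hξ : ‖ξ‖ = 0 := by nlinarith [sq_nonneg ‖ξ‖, sq_nonneg ‖η‖, sq_nonneg s, norm_nonneg ξ]
    have hη : ‖η‖ = 0 := by nlinarith [sq_nonneg ‖ξ‖, sq_nonneg ‖η‖, sq_nonneg s, norm_nonneg η]
    calc ‖ξ - η‖ ≤ ‖ξ‖ + ‖η‖ := norm_sub_le ξ η
      _ = 0 := by rw [hξ, hη, add_zero]
      _ ≤ _ := by positivity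
  have hWW : W ^ ((p - 2) / 4) * W ^ ((2 - p) / 4) = 1 := by
    rw [← rpow_add hW, show (p - 2) / 4 + (2 - p) / 4 = 0 by ring, rpow_zero]
  calc ‖ξ - η‖ = 2 / p * (p / 2 * W ^ ((p - 2) / 4) * ‖ξ - η‖) * W ^ ((2 - p) / 4) := by
        field_simp
        linear_combination (-‖ξ - η‖) * hWW
    _ ≤ _ := by gcongr; exact half_mul_rpow_mul_norm_sub_le_norm_vMap_sub hp₀.le hp₂ ξ η

theorem norm_vMap_sq_le (ξ : E) : ‖vMap p s ξ‖ ^ 2 ≤ (‖ξ‖ ^ 2 + s ^ 2) ^ (p / 2) := by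
  have hX : 0 ≤ ‖ξ‖ ^ 2 + s ^ 2 := by positivity
  rw [vMap, norm_smul, norm_of_nonneg (rpow_nonneg hX _), mul_pow, ← rpow_natCast,
    ← rpow_mul hX]
  rcases hX.eq_or_lt with hX | hX
  · have : ‖ξ‖ = 0 := by nlinarith [sq_nonneg ‖ξ‖, sq_nonneg s, norm_nonneg ξ]
    rw [this, sq, zero_mul, mul_zero]
    positivity
  calc (‖ξ‖ ^ 2 + s ^ 2) ^ ((p - 2) / 4 * ((2 : ℕ) : ℝ)) * ‖ξ‖ ^ 2
      ≤ (‖ξ‖ ^ 2 + s ^ 2) ^ ((p - 2) / 4 * ((2 : ℕ) : ℝ)) * (‖ξ‖ ^ 2 + s ^ 2) := by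
        gcongr
        linarith [sq_nonneg s]
    _ = (‖ξ‖ ^ 2 + s ^ 2) ^ (p / 2) := by
        rw [← rpow_add_one hX.ne']
        congr 1
        push_cast
        ring

theorem norm_vMap_sub_sq_le (hp₀ : 0 ≤ p) (ξ η : E) :
    ‖vMap p s ξ - vMap p s η‖ ^ 2 ≤ 4 * (‖ξ‖ ^ 2 + ‖η‖ ^ 2 + s ^ 2) ^ (p / 2) := by
  have hξ : ‖vMap p s ξ‖ ^ 2 ≤ (‖ξ‖ ^ 2 + ‖η‖ ^ 2 + s ^ 2) ^ (p / 2) :=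
    norm_vMap_sq_le ξ |>.trans <| rpow_le_rpow (by positivity) (by linarith [sq_nonneg ‖η‖])
      (by linarith)
  have hη : ‖vMap p s η‖ ^ 2 ≤ (‖ξ‖ ^ 2 + ‖η‖ ^ 2 + s ^ 2) ^ (p / 2) :=
    norm_vMap_sq_le η |>.trans <| rpow_le_rpow (by positivity) (by linarith [sq_nonneg ‖ξ‖])
      (by linarith)
  nlinarith [pow_le_pow_left₀ (norm_nonneg _) (norm_sub_le (vMap p s ξ) (vMap p s η)) 2,
    sq_nonneg (‖vMap p s ξ‖ - ‖vMap p s η‖)]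

theorem integral_norm_sub_rpow_le {α : Type*} [MeasurableSpace α] {μ : Measure α}
    {f g : α → E} (hp₀ : 0 < p) (hp₂ : p < 2) (hf : AEStronglyMeasurable f μ)
    (hg : AEStronglyMeasurable g μ)
    (hW : Integrable (fun x => (‖f x‖ ^ 2 + ‖g x‖ ^ 2 + s ^ 2) ^ (p / 2)) μ) :
    ∫ x, ‖f x - g x‖ ^ p ∂μ
      ≤ (2 / p) ^ p * (∫ x, ‖vMap p s (f x) - vMap p s (g x)‖ ^ 2 ∂μ) ^ (p / 2)
        * (∫ x, (‖f x‖ ^ 2 + ‖g x‖ ^ 2 + s ^ 2) ^ (p / 2) ∂μ) ^ ((2 - p) / 2) := by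
  set W := fun x => ‖f x‖ ^ 2 + ‖g x‖ ^ 2 + s ^ 2
  set D := fun x => vMap p s (f x) - vMap p s (g x)
  have hW₀ : ∀ x, 0 ≤ W x := fun x => by positivity
  have hvMap : ∀ {h : α → E}, AEStronglyMeasurable h μ →
      AEStronglyMeasurable (fun x => vMap p s (h x)) μ := fun hh =>
    (((hh.norm.aemeasurable.pow_const 2).add_const _).pow_const _).aestronglyMeasurable.smul hh
  have hD : Integrable (fun x => ‖D x‖ ^ 2) μ :=
    (hW.const_mul 4).mono' (((hvMap hf).sub (hvMap hg)).norm.pow 2) <| ae_of_all _ fun x => by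
      rw [norm_of_nonneg (by positivity)]
      exact norm_vMap_sub_sq_le hp₀.le _ _
  have hpt : ∀ x, ‖f x - g x‖ ^ p
      ≤ (2 / p) ^ p * ((‖D x‖ ^ 2) ^ (p / 2) * (W x ^ (p / 2)) ^ (1 - p / 2)) := fun x => by
    calc ‖f x - g x‖ ^ p ≤ (2 / p * ‖D x‖ * W x ^ ((2 - p) / 4)) ^ p :=
          rpow_le_rpow (norm_nonneg _)
            (norm_sub_le_div_mul_norm_vMap_sub_mul_rpow hp₀ hp₂.le _ _) hp₀.le
      _ = _ := by
          rw [mul_rpow (by positivity) (rpow_nonneg (hW₀ x) _),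
            mul_rpow (by positivity) (norm_nonneg _), ← rpow_natCast ‖D x‖ 2,
            ← rpow_mul (norm_nonneg _), ← rpow_mul (hW₀ x), ← rpow_mul (hW₀ x)]
          ring_nf
  have hprod := hD.rpow_mul_rpow_one_sub (θ := p / 2) hW (ae_of_all _ fun x => by positivity)
    (ae_of_all _ fun x => rpow_nonneg (hW₀ x) _) (by positivity) (by linarith)
  calc ∫ x, ‖f x - g x‖ ^ p ∂μ
      ≤ ∫ x, (2 / p) ^ p * ((‖D x‖ ^ 2) ^ (p / 2) * (W x ^ (p / 2)) ^ (1 - p / 2)) ∂μ :=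
        integral_mono_of_nonneg (ae_of_all _ fun x => by positivity) (hprod.const_mul _)
          (ae_of_all _ hpt)
    _ = (2 / p) ^ p * ∫ x, (‖D x‖ ^ 2) ^ (p / 2) * (W x ^ (p / 2)) ^ (1 - p / 2) ∂μ :=
        integral_const_mul _ _
    _ ≤ (2 / p) ^ p * ((∫ x, ‖D x‖ ^ 2 ∂μ) ^ (p / 2) * (∫ x, W x ^ (p / 2) ∂μ) ^ (1 - p / 2)) := by
        gcongr
        exact integral_rpow_mul_rpow_one_sub_le hD hW (ae_of_all _ fun x => by positivity)
          (ae_of_all _ fun x => rpow_nonneg (hW₀ x) _) (by positivity) (by linarith)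
    _ = _ := by rw [show 1 - p / 2 = (2 - p) / 2 by ring, mul_assoc]

end

/-- Hölder-interpolation bound:
`⨍_B |f-g|^p ≤ C (⨍_B |V(f)-V(g)|²)^{p/2} (⨍_B (|f|²+|g|²+s²)^{p/2})^{(2-p)/2}`
for `1 < p < 2`, where `V(ξ) = (|ξ|²+s²)^{(p-2)/4} ξ` and `C = C(n,p)`. -/
theorem avg_interpolation (n : ℕ) (p : ℝ) (hp1 : 1 < p) (hp2 : p < 2) :
    ∃ C : ℝ, 0 < C ∧
      ∀ (s : ℝ), 0 ≤ s → ∀ (x₀ : EuclideanSpace ℝ (Fin n)) (r : ℝ), 0 < r →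
      ∀ f g : EuclideanSpace ℝ (Fin n) → EuclideanSpace ℝ (Fin n),
        AEMeasurable f (volume.restrict (ball x₀ r)) →
        AEMeasurable g (volume.restrict (ball x₀ r)) →
        IntegrableOn (fun x => (‖f x‖ ^ 2 + ‖g x‖ ^ 2 + s ^ 2) ^ (p / 2)) (ball x₀ r) →
        (⨍ x in ball x₀ r, ‖f x - g x‖ ^ p)
          ≤ C * (⨍ x in ball x₀ r,
                ‖(‖f x‖ ^ 2 + s ^ 2) ^ ((p - 2) / 4) • f x -
                  (‖g x‖ ^ 2 + s ^ 2) ^ ((p - 2) / 4) • g x‖ ^ 2) ^ (p / 2)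
            * (⨍ x in ball x₀ r,
                (‖f x‖ ^ 2 + ‖g x‖ ^ 2 + s ^ 2) ^ (p / 2)) ^ ((2 - p) / 2) := by
  refine ⟨(2 / p) ^ p, by positivity, fun s _ x₀ r hr f g hf hg hW => ?_⟩
  have hB : (volume.restrict (ball x₀ r)) Set.univ ≠ 0 := by
    rw [Measure.restrict_apply_univ]
    exact (measure_ball_pos volume x₀ hr).ne'
  -- `⨍` over the ball is by definition the integral against the normalised restricted measure
  exact integral_norm_sub_rpow_le (by linarith) hp2 (hf.smul_measure _).aestronglyMeasurable
    (hg.smul_measure _).aestronglyMeasurable (hW.smul_measure (ENNReal.inv_ne_top.2 hB))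
end

section
/- Let R > 0, s ≥ 0, and let g : B_R(x₀) → [0,∞) be a bounded measurable function. Suppose there exists ρ₀ ∈ (0, R/4] and C₁ ≥ 0 such that for every ball B_{2ρ}(x) ⊂⊂ B_R(x₀) with ρ ∈ (0, ρ₀], one has g(x) ≤ C₁ ρ^{-n} ∫_{B_ρ(x)} g + 3^{-n} ( sup_{B_ρ(x)} g + s ) for a.e. x. Then sup_{B_{R/2}(x₀)} g + s ≤ C R^{-n} ∫_{B_R(x₀)} (g + s), where C depends only on n, C₁ and ρ₀/R. -/
open MeasureTheory Metric Set

/-! Weight `g` by the distance to the boundary of `B_{3R/4}(x₀)`: with `d(x) = 3R/4 - |x - x₀|`,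
the supremum `F` of `d^n g` over `B_{3R/4}(x₀)` is finite since `g` is bounded. At a point `x`
use the hypothesis with `ρ = min (θR) (d(x)/4)`: then `d(x)/ρ ≤ θ⁻¹` and `d ≥ 3d(x)/4` on
`B_ρ(x)`, so `d(x)^n g(x) ≤ C₁ θ^{-n} ∫ g + (4/9)^n F + (R/4)^n s`. Taking the supremum, the
factor `(4/9)^n < 1` lets `F` be absorbed, and `d ≥ R/4` on `B_{R/2}(x₀)`. In dimension zero the
space is a point and the estimate is an identity. -/

theorem le_div_of_le_add_mul_sSup {α : Type*} {S : Set α} {φ : α → ℝ} {A q : ℝ}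
    (hφ : BddAbove (φ '' S)) (hq : q < 1) (h : ∀ x ∈ S, φ x ≤ A + q * sSup (φ '' S))
    {x : α} (hx : x ∈ S) : φ x ≤ A / (1 - q) := by
  have hxF : φ x ≤ sSup (φ '' S) := le_csSup hφ (mem_image_of_mem φ hx)
  have hF : sSup (φ '' S) ≤ A + q * sSup (φ '' S) :=
    csSup_le ⟨_, mem_image_of_mem φ hx⟩ (by rintro _ ⟨y, hy, rfl⟩; exact h y hy)
  rw [le_div_iff₀ (sub_pos.2 hq)]
  nlinarith

section WeightedSup

variable {X : Type*} [PseudoMetricSpace X]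

theorem le_sub_dist_of_mem_ball {x₀ x y : X} {r ρ : ℝ} (hρ : ρ ≤ (r - dist x x₀) / 4)
    (hy : y ∈ ball x ρ) : 3 / 4 * (r - dist x x₀) ≤ r - dist y x₀ := by
  linarith [dist_triangle y x x₀, mem_ball.1 hy]

theorem pow_div_three_mul_sSup_le {g : X → ℝ} (hg0 : ∀ x, 0 ≤ g x) {x₀ x : X} {r ρ F : ℝ}
    {n : ℕ} (hx : x ∈ ball x₀ r) (hρ : ρ ≤ (r - dist x x₀) / 4) (hF0 : 0 ≤ F)
    (hF : ∀ y ∈ ball x₀ r, (r - dist y x₀) ^ n * g y ≤ F) :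
    ((r - dist x x₀) / 3) ^ n * sSup (g '' ball x ρ) ≤ (4 / 9) ^ n * F := by
  have hd : 0 < r - dist x x₀ := sub_pos.2 (mem_ball.1 hx)
  rw [← le_div_iff₀' (by positivity)]
  refine Real.sSup_le ?_ (by positivity)
  rintro _ ⟨y, hy, rfl⟩
  have hdy := le_sub_dist_of_mem_ball hρ hy
  have hyS : y ∈ ball x₀ r := mem_ball.2 (by linarith)
  rw [le_div_iff₀' (by positivity)]
  calc ((r - dist x x₀) / 3) ^ n * g y
      = (4 / 9) ^ n * ((3 / 4 * (r - dist x x₀)) ^ n * g y) := by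
        rw [← mul_assoc, ← mul_pow]; ring_nf
    _ ≤ (4 / 9) ^ n * F := by
        gcongr
        exact (mul_le_mul_of_nonneg_right (pow_le_pow_left₀ (by positivity) hdy n) (hg0 y)).trans
          (hF y hyS)

theorem pow_sub_dist_mul_le_of_local_bound {g : X → ℝ} (hg0 : ∀ x, 0 ≤ g x)
    (hg : BddAbove (range g)) {x₀ : X} {r A s : ℝ} {n : ℕ} (hn : n ≠ 0) (hA : 0 ≤ A)
    (hs : 0 ≤ s)
    (h : ∀ x ∈ ball x₀ r, ∃ ρ ≤ (r - dist x x₀) / 4,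
      (r - dist x x₀) ^ n * g x ≤ A + ((r - dist x x₀) / 3) ^ n * (sSup (g '' ball x ρ) + s))
    {x : X} (hx : x ∈ ball x₀ r) :
    (r - dist x x₀) ^ n * g x ≤ 9 / 5 * (A + (r / 3) ^ n * s) := by
  set φ : X → ℝ := fun y ↦ (r - dist y x₀) ^ n * g y
  obtain ⟨M, hM⟩ := hg
  have hr : 0 < r := pos_of_mem_ball hx
  have hdr : ∀ y, r - dist y x₀ ≤ r := fun y ↦ by linarith [dist_nonneg (x := y) (y := x₀)]
  have hφ0 : ∀ y ∈ ball x₀ r, 0 ≤ φ y := fun y hy ↦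
    mul_nonneg (pow_nonneg (sub_pos.2 (mem_ball.1 hy)).le n) (hg0 y)
  have hφ : BddAbove (φ '' ball x₀ r) := by
    refine ⟨r ^ n * M, ?_⟩
    rintro _ ⟨y, hy, rfl⟩
    exact mul_le_mul (pow_le_pow_left₀ (sub_pos.2 (mem_ball.1 hy)).le (hdr y) n)
      (hM (mem_range_self y)) (hg0 y) (pow_nonneg hr.le n)
  have hF : ∀ y ∈ ball x₀ r, φ y ≤ sSup (φ '' ball x₀ r) := fun y hy ↦
    le_csSup hφ (mem_image_of_mem φ hy)
  have hF0 : 0 ≤ sSup (φ '' ball x₀ r) := (hφ0 x hx).trans (hF x hx)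
  have habsorb : ∀ y ∈ ball x₀ r,
      φ y ≤ (A + (r / 3) ^ n * s) + (4 / 9) ^ n * sSup (φ '' ball x₀ r) := by
    intro y hy
    obtain ⟨ρ, hρ, hyρ⟩ := h y hy
    have hdy : 0 < r - dist y x₀ := sub_pos.2 (mem_ball.1 hy)
    have hsup := pow_div_three_mul_sSup_le hg0 hy hρ hF0 hF
    have hs' : ((r - dist y x₀) / 3) ^ n * s ≤ (r / 3) ^ n * s := by
      gcongr
      exact hdr y
    calc φ y ≤ A + ((r - dist y x₀) / 3) ^ n * (sSup (g '' ball y ρ) + s) := hyρ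
      _ ≤ _ := by rw [mul_add]; linarith
  have hq : (4 / 9 : ℝ) ^ n ≤ 4 / 9 := pow_le_of_le_one (by norm_num) (by norm_num) hn
  calc φ x ≤ (A + (r / 3) ^ n * s) / (1 - (4 / 9) ^ n) :=
        le_div_of_le_add_mul_sSup hφ (by linarith) habsorb hx
    _ ≤ 9 / 5 * (A + (r / 3) ^ n * s) := by
        rw [div_le_iff₀ (by linarith)]
        have : 0 ≤ A + (r / 3) ^ n * s := by positivity
        nlinarith

end WeightedSup

theorem pow_mul_le_of_local_estimate {n : ℕ} {a d ρ θ C₁ J I S s : ℝ} (hθ : 0 < θ)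
    (hd : 0 < d) (hρ : θ * d ≤ ρ) (hC₁ : 0 ≤ C₁) (hJ0 : 0 ≤ J) (hJ : J ≤ I)
    (h : a ≤ C₁ * ρ ^ (-(n : ℝ)) * J + (3 : ℝ) ^ (-(n : ℝ)) * (S + s)) :
    d ^ n * a ≤ C₁ * θ⁻¹ ^ n * I + (d / 3) ^ n * (S + s) := by
  have hρ0 : 0 < ρ := (mul_pos hθ hd).trans_le hρ
  have hdρ : d / ρ ≤ θ⁻¹ := by
    rw [div_le_iff₀ hρ0, ← div_eq_inv_mul, le_div_iff₀' hθ]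
    exact hρ
  rw [Real.rpow_neg_natCast, Real.rpow_neg_natCast, zpow_neg, zpow_neg, zpow_natCast,
    zpow_natCast] at h
  calc d ^ n * a ≤ C₁ * (d / ρ) ^ n * J + (d / 3) ^ n * (S + s) := by
        refine (mul_le_mul_of_nonneg_left h (pow_nonneg hd.le n)).trans_eq ?_
        rw [div_pow, div_pow]
        ring
    _ ≤ C₁ * θ⁻¹ ^ n * I + (d / 3) ^ n * (S + s) := by
        gcongr

theorem sSup_image_ball_half_le {X : Type*} [PseudoMetricSpace X] [MeasurableSpace X]
    [OpensMeasurableSpace X] (μ : Measure X) {n : ℕ} (hn : n ≠ 0) {C₁ θ R s : ℝ}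
    (hC₁ : 0 ≤ C₁) (hθ0 : 0 < θ) (hθ1 : θ ≤ 1 / 4) (hR : 0 < R) (hs : 0 ≤ s) {x₀ : X}
    {g : X → ℝ} (hg0 : ∀ x, 0 ≤ g x) (hg : BddAbove (range g))
    (hint : IntegrableOn g (ball x₀ R) μ)
    (hyp : ∀ x ∈ ball x₀ R, ∀ ρ : ℝ, 0 < ρ → ρ ≤ θ * R → closedBall x (2 * ρ) ⊆ ball x₀ R →
      g x ≤ C₁ * ρ ^ (-(n : ℝ)) * (∫ y in ball x ρ, g y ∂μ) +
        (3 : ℝ) ^ (-(n : ℝ)) * (sSup (g '' ball x ρ) + s)) :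
    sSup (g '' ball x₀ (R / 2)) ≤
      9 / 5 * (4 / θ) ^ n * C₁ * R ^ (-(n : ℝ)) * (∫ y in ball x₀ R, g y ∂μ) + 9 / 5 * s := by
  set I := ∫ y in ball x₀ R, g y ∂μ
  have hI0 : 0 ≤ I := setIntegral_nonneg measurableSet_ball fun y _ ↦ hg0 y
  have hlocal : ∀ x ∈ ball x₀ (3 * R / 4), ∃ ρ ≤ (3 * R / 4 - dist x x₀) / 4,
      (3 * R / 4 - dist x x₀) ^ n * g x ≤
        C₁ * θ⁻¹ ^ n * I + ((3 * R / 4 - dist x x₀) / 3) ^ n * (sSup (g '' ball x ρ) + s) := by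
    intro x hx
    set d := 3 * R / 4 - dist x x₀ with hd_def
    have hd : 0 < d := sub_pos.2 (mem_ball.1 hx)
    have hdR : d ≤ R := by linarith [dist_nonneg (x := x) (y := x₀)]
    set ρ := min (θ * R) (d / 4)
    have hρ0 : 0 < ρ := lt_min (mul_pos hθ0 hR) (by positivity)
    have hθd : θ * d ≤ ρ := le_min (by gcongr) (by nlinarith)
    have hsub : closedBall x (2 * ρ) ⊆ ball x₀ R := fun y hy ↦ by
      have hρd : ρ ≤ d / 4 := min_le_right _ _
      exact mem_ball.2 (by linarith [dist_triangle y x x₀, mem_closedBall.1 hy])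
    refine ⟨ρ, min_le_right _ _, pow_mul_le_of_local_estimate hθ0 hd hθd hC₁
      (setIntegral_nonneg measurableSet_ball fun y _ ↦ hg0 y)
      (setIntegral_mono_set hint (ae_of_all _ hg0)
        (ball_subset_closedBall.trans ((closedBall_subset_closedBall (by linarith)).trans
          hsub)).eventuallyLE)
      (hyp x (hsub (mem_closedBall_self (by positivity))) ρ hρ0 (min_le_left _ _) hsub)⟩
  refine Real.sSup_le ?_ (by positivity)
  rintro _ ⟨x, hx, rfl⟩
  have hx' : x ∈ ball x₀ (3 * R / 4) := ball_subset_ball (by linarith) hx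
  have hd : R / 4 ≤ 3 * R / 4 - dist x x₀ := by linarith [mem_ball.1 hx]
  have hweighted := pow_sub_dist_mul_le_of_local_bound hg0 hg hn (by positivity) hs hlocal hx'
  have hR4 : (R / 4) ^ n * g x ≤ 9 / 5 * (C₁ * θ⁻¹ ^ n * I + (R / 4) ^ n * s) := by
    refine (mul_le_mul_of_nonneg_right (pow_le_pow_left₀ (by positivity) hd n) (hg0 x)).trans ?_
    rwa [show 3 * R / 4 / 3 = R / 4 by ring] at hweighted
  rw [Real.rpow_neg_natCast, zpow_neg, zpow_natCast]
  rw [← mul_le_mul_iff_right₀ (by positivity : (0 : ℝ) < (R / 4) ^ n)]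
  refine hR4.trans_eq ?_
  rw [div_pow, div_pow, inv_pow]
  field_simp

theorem measureReal_ball_mul_sSup_image_of_subsingleton {X : Type*} [PseudoMetricSpace X]
    [MeasurableSpace X] [Subsingleton X] (μ : Measure X) (g : X → ℝ) (x₀ : X) {r R : ℝ}
    (hr : 0 < r) :
    μ.real (ball x₀ R) * sSup (g '' ball x₀ r) = ∫ y in ball x₀ R, g y ∂μ := by
  have hg : g = fun _ ↦ g x₀ := funext fun y ↦ congrArg g (Subsingleton.elim y x₀)
  rw [hg, (nonempty_ball.2 hr).image_const, csSup_singleton, setIntegral_const, smul_eq_mul]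

theorem MeasureTheory.Measure.addHaar_real_ball_of_pos {E : Type*} [NormedAddCommGroup E]
    [NormedSpace ℝ E] [MeasurableSpace E] [BorelSpace E] [FiniteDimensional ℝ E]
    (μ : Measure E) [μ.IsAddHaarMeasure] (x : E) {r : ℝ} (hr : 0 < r) :
    μ.real (ball x r) = r ^ Module.finrank ℝ E * μ.real (ball 0 1) := by
  rw [measureReal_def, Measure.addHaar_ball_of_pos μ x hr, ENNReal.toReal_mul,
    ENNReal.toReal_ofReal (by positivity), measureReal_def]

theorem EuclideanSpace.sSup_image_ball_half_le {n : ℕ} {C₁ θ R s : ℝ} (hC₁ : 0 ≤ C₁)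
    (hθ0 : 0 < θ) (hθ1 : θ ≤ 1 / 4) (hR : 0 < R) (hs : 0 ≤ s) {x₀ : EuclideanSpace ℝ (Fin n)}
    {g : EuclideanSpace ℝ (Fin n) → ℝ} (hg0 : ∀ x, 0 ≤ g x) (hg : BddAbove (range g))
    (hint : IntegrableOn g (ball x₀ R))
    (hyp : ∀ x ∈ ball x₀ R, ∀ ρ : ℝ, 0 < ρ → ρ ≤ θ * R → closedBall x (2 * ρ) ⊆ ball x₀ R →
      g x ≤ C₁ * ρ ^ (-(n : ℝ)) * (∫ y in ball x ρ, g y) +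
        (3 : ℝ) ^ (-(n : ℝ)) * (sSup (g '' ball x ρ) + s)) :
    sSup (g '' ball x₀ (R / 2)) ≤
      (9 / 5 * (4 / θ) ^ n * C₁ + (volume.real (ball (0 : EuclideanSpace ℝ (Fin n)) 1))⁻¹) *
        R ^ (-(n : ℝ)) * (∫ y in ball x₀ R, g y) + 9 / 5 * s := by
  have hJ0 : 0 ≤ ∫ y in ball x₀ R, g y := setIntegral_nonneg measurableSet_ball fun y _ ↦ hg0 y
  have hC : 0 ≤ 9 / 5 * (4 / θ) ^ n * C₁ := by positivity
  rcases eq_or_ne n 0 with rfl | hn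
  · have hω : 0 < volume.real (ball (0 : EuclideanSpace ℝ (Fin 0)) 1) :=
      ENNReal.toReal_pos (measure_ball_pos volume 0 one_pos).ne' measure_ball_lt_top.ne
    have h := measureReal_ball_mul_sSup_image_of_subsingleton volume g x₀ (R := R)
      (half_pos hR)
    rw [Measure.addHaar_real_ball_of_pos volume x₀ hR, finrank_euclideanSpace_fin, pow_zero,
      one_mul] at h
    rw [Nat.cast_zero, neg_zero, Real.rpow_zero, mul_one, add_mul, ← h,
      inv_mul_cancel_left₀ hω.ne', h]
    nlinarith [mul_nonneg hC hJ0]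
  · have h := _root_.sSup_image_ball_half_le volume hn hC₁ hθ0 hθ1 hR hs hg0 hg hint hyp
    have hω : 0 ≤ (volume.real (ball (0 : EuclideanSpace ℝ (Fin n)) 1))⁻¹ :=
      inv_nonneg.2 measureReal_nonneg
    nlinarith [mul_nonneg hω (mul_nonneg (Real.rpow_nonneg hR.le (-(n : ℝ))) hJ0)]

/-- Abstract absorption/bootstrap argument: if a bounded nonnegative `g` satisfies
`g(x) ≤ C₁ ρ^{-n} ∫_{B_ρ(x)} g + 3^{-n}(sup_{B_ρ(x)} g + s)` on all balls
`B_{2ρ}(x) ⊂⊂ B_R(x₀)` with `ρ ≤ ρ₀ = θR`, then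
`sup_{B_{R/2}(x₀)} g + s ≤ C R^{-n} ∫_{B_R(x₀)} (g + s)`, with `C = C(n, C₁, θ)`. -/
theorem absorption_bootstrap (n : ℕ) (C₁ θ : ℝ) (hC₁ : 0 ≤ C₁)
    (hθ0 : 0 < θ) (hθ1 : θ ≤ 1 / 4) :
    ∃ C : ℝ, 0 < C ∧
      ∀ (R s : ℝ), 0 < R → 0 ≤ s →
      ∀ (x₀ : EuclideanSpace ℝ (Fin n)) (g : EuclideanSpace ℝ (Fin n) → ℝ),
        Measurable g → (∀ x, 0 ≤ g x) → (∃ M, ∀ x, g x ≤ M) →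
        (∀ x ∈ ball x₀ R, ∀ ρ : ℝ, 0 < ρ → ρ ≤ θ * R →
          closedBall x (2 * ρ) ⊆ ball x₀ R →
          g x ≤ C₁ * ρ ^ (-(n:ℝ)) * (∫ y in ball x ρ, g y) +
            (3:ℝ) ^ (-(n:ℝ)) * (sSup (g '' ball x ρ) + s)) →
        sSup (g '' ball x₀ (R / 2)) + s
          ≤ C * R ^ (-(n:ℝ)) * ∫ y in ball x₀ R, (g y + s) := by
  set ω := volume.real (ball (0 : EuclideanSpace ℝ (Fin n)) 1)
  have hω : 0 < ω := ENNReal.toReal_pos (measure_ball_pos volume 0 one_pos).ne'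
    measure_ball_lt_top.ne
  -- Of `4 / ω`, `1 / ω` covers dimension zero and `3 / ω` pays for `14/5 s`, as `∫_{B_R} s = ω R^n s`.
  refine ⟨9 / 5 * (4 / θ) ^ n * C₁ + 4 / ω, by positivity, ?_⟩
  rintro R s hR hs x₀ g hgm hg0 ⟨M, hM⟩ hyp
  have hint : IntegrableOn g (ball x₀ R) :=
    Measure.integrableOn_of_bounded measure_ball_lt_top.ne hgm.aestronglyMeasurable
      (ae_of_all _ fun y ↦ by rw [Real.norm_of_nonneg (hg0 y)]; exact hM y)
  have hsup := EuclideanSpace.sSup_image_ball_half_le hC₁ hθ0 hθ1 hR hs hg0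
    ⟨M, forall_mem_range.2 hM⟩ hint hyp
  have hJ0 : 0 ≤ R ^ (-(n : ℝ)) * ∫ y in ball x₀ R, g y :=
    mul_nonneg (by positivity) (setIntegral_nonneg measurableSet_ball fun y _ ↦ hg0 y)
  have hC : 0 ≤ 9 / 5 * (4 / θ) ^ n * C₁ := by positivity
  have hRn : R ^ (-(n : ℝ)) * R ^ n = 1 := by
    rw [Real.rpow_neg_natCast, zpow_neg, zpow_natCast, inv_mul_cancel₀ (by positivity)]
  rw [integral_add hint (integrableOn_const measure_ball_lt_top.ne), setIntegral_const,
    smul_eq_mul, Measure.addHaar_real_ball_of_pos volume x₀ hR, finrank_euclideanSpace_fin]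
  linear_combination hsup + mul_nonneg (by positivity : 0 ≤ 3 / ω) hJ0 +
    mul_nonneg hC (mul_nonneg hω.le hs) + 6 / 5 * hs +
    -((9 / 5 * (4 / θ) ^ n * C₁ + 4 / ω) * ω * s) * hRn - s * div_mul_cancel₀ 4 hω.ne'
end
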